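/- Let m ≥ 1, n = m+1, h > 0, M_α > 0, L ≥ 0, ε ≥ 0, and let D ∈ ℝⁿ have entries D_1,…,D_n. Let 1 ≤ i₀ ≤ m and assume |D_i − D_{i+2}| ≤ 2hL for all 1 ≤ i < i₀ and 0 ≤ D_j ≤ ε for all i₀ ≤ j ≤ n. Define Term₂(v) = (M_α/4)·(Σ_{i=1}^{m−1}(D_i − D_{i+2})v_i² + (D_m + D_{m+1})v_m²). Then for every v ∈ ℝ^m, |Term₂(v)| ≤ (M_α/2)·L·(h·Σ_{i=1}^{m} v_i²) + (M_α/2)·ε·(m − i₀ + 1)·max_{1≤i≤m} v_i². -/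

import Mathlib

/-!
Split the interior sum at `i₀`. Below `i₀` each coefficient `|D_i − D_{i+2}|` is at most `2hL`,
and these weights `v_i²` sum to at most `Σ v_i²`. From `i₀` on, `D_i` and `D_{i+2}` both lie in
`[0, ε]`, so each of the at most `m − i₀` remaining coefficients is at most `ε`, the boundary
coefficient `D_m + D_{m+1}` is at most `2ε`, and every `v_i²` is at most `max v_i²`. The resulting
`(M_α/4)(m − i₀ + 2)` in front of `ε · max v_i²` is at most `(M_α/2)(m − i₀ + 1)`.
-/

open Finset

/-- 1-based access to the entries of a finite vector, with value `0` at index `0`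
and out of range. -/
def pad1 {n : ℕ} (v : Fin n → ℝ) : ℕ → ℝ :=
  fun k => if hk : k - 1 < n then (if k = 0 then 0 else v ⟨k - 1, hk⟩) else 0

/-- `Term₂(v) = (M_α/4)(Σ_{i=1}^{m−1}(D_i − D_{i+2})v_i² + (D_m + D_{m+1})v_m²)`. -/
noncomputable def term2 (m : ℕ) (Ma : ℝ) (D : Fin (m + 1) → ℝ) (v : Fin m → ℝ) : ℝ :=
  (Ma / 4) *
    ((∑ i ∈ Finset.Icc 1 (m - 1), (pad1 D i - pad1 D (i + 2)) * (pad1 v i) ^ 2)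
      + (pad1 D m + pad1 D (m + 1)) * (pad1 v m) ^ 2)

lemma pad1_succ {n : ℕ} (v : Fin n → ℝ) (i : Fin n) : pad1 v (i + 1) = v i := by
  simp [pad1]

lemma pad1_sq_le_sup' {n : ℕ} (v : Fin n → ℝ) (hne : (univ : Finset (Fin n)).Nonempty)
    (k : ℕ) : pad1 v k ^ 2 ≤ univ.sup' hne fun i => v i ^ 2 := by
  have hsup0 : 0 ≤ univ.sup' hne fun i => v i ^ 2 :=
    (sq_nonneg _).trans (le_sup' (fun i => v i ^ 2) hne.choose_spec)
  unfold pad1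
  split_ifs
  · simpa using hsup0
  · exact le_sup' (fun i => v i ^ 2) (mem_univ _)
  · simpa using hsup0

lemma sum_Icc_pad1 {n : ℕ} (v : Fin n → ℝ) (f : ℝ → ℝ) :
    ∑ k ∈ Icc 1 n, f (pad1 v k) = ∑ i, f (v i) := by
  rw [← Finset.Ico_add_one_right_eq_Icc, sum_Ico_eq_sum_range, Nat.add_sub_cancel,
    ← Fin.sum_univ_eq_sum_range (fun i => f (pad1 v (1 + i)))]
  simp only [add_comm 1, pad1_succ]

lemma abs_sum_mul_le_of_split {ι : Type*} (s : Finset ι) (p : ι → Prop) [DecidablePred p]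
    {d w : ι → ℝ} {K ε M : ℝ} (hw : ∀ i ∈ s, 0 ≤ w i) (hwM : ∀ i ∈ s, ¬ p i → w i ≤ M)
    (hK : ∀ i ∈ s, p i → |d i| ≤ K) (hε : ∀ i ∈ s, ¬ p i → |d i| ≤ ε) :
    |∑ i ∈ s, d i * w i| ≤ K * ∑ i ∈ s.filter p, w i + #(s.filter (¬ p ·)) * (ε * M) := by
  refine (abs_sum_le_sum_abs _ _).trans ?_
  rw [← sum_filter_add_sum_filter_not s p, mul_sum]
  refine add_le_add ?_ ?_
  · refine sum_le_sum fun i hi => ?_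
    rw [mem_filter] at hi
    rw [abs_mul, abs_of_nonneg (hw i hi.1)]
    exact mul_le_mul_of_nonneg_right (hK i hi.1 hi.2) (hw i hi.1)
  · rw [← nsmul_eq_mul]
    refine sum_le_card_nsmul _ _ _ fun i hi => ?_
    rw [mem_filter] at hi
    rw [abs_mul, abs_of_nonneg (hw i hi.1)]
    exact mul_le_mul (hε i hi.1 hi.2) (hwM i hi.1 hi.2) (hw i hi.1)
      ((abs_nonneg _).trans (hε i hi.1 hi.2))

lemma abs_add_mul_le_two_mul {a b w ε M : ℝ} (ha₀ : 0 ≤ a) (ha : a ≤ ε) (hb₀ : 0 ≤ b) (hb : b ≤ ε)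
    (hw₀ : 0 ≤ w) (hw : w ≤ M) : |(a + b) * w| ≤ 2 * (ε * M) := by
  rw [abs_of_nonneg (by positivity)]
  nlinarith

lemma abs_sum_Icc_sub_mul_pad1_sq_le {m i₀ : ℕ} (hi₀m : i₀ ≤ m) {D : Fin (m + 1) → ℝ}
    {v : Fin m → ℝ} {K ε M : ℝ} (hK : 0 ≤ K) (hvM : ∀ k, pad1 v k ^ 2 ≤ M)
    (hLip : ∀ i : ℕ, 1 ≤ i → i < i₀ → |pad1 D i - pad1 D (i + 2)| ≤ K)
    (hEps : ∀ j : ℕ, i₀ ≤ j → j ≤ m + 1 → 0 ≤ pad1 D j ∧ pad1 D j ≤ ε) :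
    |∑ i ∈ Icc 1 (m - 1), (pad1 D i - pad1 D (i + 2)) * pad1 v i ^ 2|
      ≤ K * ∑ i, v i ^ 2 + (m - i₀) * (ε * M) := by
  have hDegenerate : ∀ i ∈ Icc 1 (m - 1), ¬ i < i₀ → |pad1 D i - pad1 D (i + 2)| ≤ ε := by
    intro i hi hi₀i
    obtain ⟨hi1, him⟩ := mem_Icc.1 hi
    obtain ⟨h0, h1⟩ := hEps i (not_lt.1 hi₀i) (by omega)
    obtain ⟨h2, h3⟩ := hEps (i + 2) (by omega) (by omega)
    exact abs_sub_le_of_nonneg_of_le h0 h1 h2 h3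
  refine (abs_sum_mul_le_of_split _ (· < i₀) (fun _ _ => sq_nonneg _) (fun i _ _ => hvM i)
    (fun i hi => hLip i (mem_Icc.1 hi).1) hDegenerate).trans ?_
  have hcard : #((Icc 1 (m - 1)).filter (¬ · < i₀)) ≤ m - i₀ := by
    refine (card_le_card fun i => ?_).trans (Nat.card_Ico i₀ m).le
    simp only [mem_filter, mem_Icc, mem_Ico]
    omega
  obtain ⟨hD₀, hDε⟩ := hEps (m + 1) (by omega) le_rfl
  have hεM : 0 ≤ ε * M := mul_nonneg (hD₀.trans hDε) ((sq_nonneg _).trans (hvM 0))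
  rw [← sum_Icc_pad1 v (· ^ 2)]
  gcongr
  · exact (filter_subset _ _).trans (Icc_subset_Icc_right (Nat.sub_le m 1))
  · exact (Nat.cast_le.2 hcard).trans (by rw [Nat.cast_sub hi₀m])

theorem stmt_15_general (m : ℕ) (hm : 1 ≤ m) (h Ma L ε : ℝ)
    (hh : 0 < h) (hMa : 0 < Ma) (hL : 0 ≤ L) (hε : 0 ≤ ε)
    (D : Fin (m + 1) → ℝ)
    (i₀ : ℕ) (hi₀m : i₀ ≤ m)
    (hLip : ∀ i : ℕ, 1 ≤ i → i < i₀ → |pad1 D i - pad1 D (i + 2)| ≤ 2 * h * L)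
    (hEps : ∀ j : ℕ, i₀ ≤ j → j ≤ m + 1 → 0 ≤ pad1 D j ∧ pad1 D j ≤ ε) :
    ∀ v : Fin m → ℝ,
      |term2 m Ma D v| ≤
        (Ma / 2) * L * (h * ∑ i : Fin m, (v i) ^ 2)
          + (Ma / 2) * ε * ((m : ℝ) - (i₀ : ℝ) + 1) *
            (Finset.univ.sup' ⟨⟨0, hm⟩, Finset.mem_univ _⟩ fun i => (v i) ^ 2) := by
  intro v
  set M := univ.sup' ⟨⟨0, hm⟩, mem_univ _⟩ fun i => v i ^ 2
  have hvM : ∀ k, pad1 v k ^ 2 ≤ M := pad1_sq_le_sup' v _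
  have hεM : 0 ≤ ε * M := mul_nonneg hε ((sq_nonneg _).trans (hvM 0))
  have hi₀ : (0 : ℝ) ≤ m - i₀ := sub_nonneg.2 (by exact_mod_cast hi₀m)
  have hInterior := abs_sum_Icc_sub_mul_pad1_sq_le hi₀m (by positivity) hvM hLip hEps
  have hBoundary : |(pad1 D m + pad1 D (m + 1)) * pad1 v m ^ 2| ≤ 2 * (ε * M) := by
    obtain ⟨hDm₀, hDm⟩ := hEps m hi₀m (by omega)
    obtain ⟨hDm₀', hDm'⟩ := hEps (m + 1) (by omega) le_rfl
    exact abs_add_mul_le_two_mul hDm₀ hDm hDm₀' hDm' (sq_nonneg _) (hvM m)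
  calc |term2 m Ma D v|
      ≤ Ma / 4 * (2 * h * L * ∑ i, v i ^ 2 + (m - i₀) * (ε * M) + 2 * (ε * M)) := by
        rw [term2, abs_mul, abs_of_pos (by positivity : 0 < Ma / 4)]
        gcongr
        exact (abs_add_le _ _).trans (add_le_add hInterior hBoundary)
    _ ≤ _ := by nlinarith [mul_nonneg (mul_nonneg hMa.le hi₀) hεM]

theorem stmt_15 (m : ℕ) (hm : 1 ≤ m) (h Ma L ε : ℝ)
    (hh : 0 < h) (hMa : 0 < Ma) (hL : 0 ≤ L) (hε : 0 ≤ ε)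
    (D : Fin (m + 1) → ℝ)
    (i₀ : ℕ) (hi₀1 : 1 ≤ i₀) (hi₀m : i₀ ≤ m)
    (hLip : ∀ i : ℕ, 1 ≤ i → i < i₀ → |pad1 D i - pad1 D (i + 2)| ≤ 2 * h * L)
    (hEps : ∀ j : ℕ, i₀ ≤ j → j ≤ m + 1 → 0 ≤ pad1 D j ∧ pad1 D j ≤ ε) :
    ∀ v : Fin m → ℝ,
      |term2 m Ma D v| ≤
        (Ma / 2) * L * (h * ∑ i : Fin m, (v i) ^ 2)
          + (Ma / 2) * ε * ((m : ℝ) - (i₀ : ℝ) + 1) *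
            (Finset.univ.sup' ⟨⟨0, hm⟩, Finset.mem_univ _⟩ fun i => (v i) ^ 2) :=
  stmt_15_general m hm h Ma L ε hh hMa hL hε D i₀ hi₀m hLip hEps
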